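/- Let A ∈ ℝ^{N×N} (N = 2M+1) be the symmetric pentadiagonal Toeplitz matrix with diagonal 2(k₁+k₂), first off-diagonals -k₁, second off-diagonals -k₂, with k₁ = 1, k₂ ∈ (-1/4, 0). Then the corner entries of the inverse satisfy (A^{-1})_{1,1} > 0 and (A^{-1})_{1,N} > 0. -/

import Mathlib

/-!
Let `E` be the superdiagonal shift and `P = 2 - E - Eᵀ` the Dirichlet Laplacian. Expanding `P²`
with `E Eᵀ = 1 - e_N e_Nᵀ` and `Eᵀ E = 1 - e_1 e_1ᵀ` gives `A = D - k₂ e_1 e_1ᵀ - k₂ e_N e_Nᵀ`,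
where `D = (1 + 4k₂) P - k₂ P² = P Q` with `Q = (1 + 4k₂) - k₂ P`. As `P` is positive definite and
`-k₂ > 0`, so are `D`, `B = D - k₂ e_1 e_1ᵀ` and `A`; this gives `(A⁻¹)₁₁ > 0`. Two Sherman–Morrison
updates give `(A⁻¹)₁N = (D⁻¹)₁N / ((1 - k₂ (D⁻¹)₁₁) (1 - k₂ (B⁻¹)_NN))`, and
`(D⁻¹)₁N = ∑ₖ (Q⁻¹)₁ₖ (P⁻¹)ₖN > 0`: the last column of `P⁻¹` is `(k / (N + 1))ₖ`, and `Q⁻¹ ≥ 0`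
entrywise by the discrete minimum principle, since `Q` has non-positive off-diagonal entries and,
because `1 + 4k₂ > 0`, positive row sums.
-/

open Matrix

namespace Matrix

theorem mul_apply_eq_mulVec_apply {l m n α : Type*} [Fintype m] [NonUnitalNonAssocSemiring α]
    (A : Matrix l m α) (B : Matrix m n α) (i : l) (j : n) :
    (A * B) i j = (A *ᵥ fun k => B k j) i :=
  rfl

theorem posSemidef_single {ι R : Type*} [Fintype ι] [DecidableEq ι] [CommRing R] [PartialOrder R]
    [StarRing R] [StarOrderedRing R] (i : ι) {a : R} (ha : 0 ≤ a) :
    (single i i a).PosSemidef := by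
  rw [← diagonal_single]
  exact posSemidef_diagonal_iff.2 fun j => by
    rw [Pi.single_apply]
    split_ifs <;> simp [ha]

section MinimumPrinciple

variable {ι R : Type*} [Fintype ι] [Field R] [LinearOrder R] [IsStrictOrderedRing R]
  {Q : Matrix ι ι R}

theorem nonneg_of_mulVec_nonneg (hoff : ∀ i j, i ≠ j → Q i j ≤ 0) (hrow : ∀ i, 0 < ∑ j, Q i j)
    {x : ι → R} (hx : 0 ≤ Q *ᵥ x) : 0 ≤ x := by
  intro i
  obtain ⟨m, -, hm⟩ := Finset.univ.exists_min_image x ⟨i, Finset.mem_univ i⟩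
  by_contra! hneg
  have hxm : x m < 0 := (hm i (Finset.mem_univ i)).trans_lt hneg
  have hle : (Q *ᵥ x) m ≤ (∑ j, Q m j) * x m := by
    rw [mulVec, dotProduct, Finset.sum_mul]
    refine Finset.sum_le_sum fun j _ => ?_
    rcases eq_or_ne m j with rfl | hmj
    · rfl
    · exact mul_le_mul_of_nonpos_left (hm j (Finset.mem_univ j)) (hoff m j hmj)
  exact (hx m).not_gt (hle.trans_lt (mul_neg_of_pos_of_neg (hrow m) hxm))

theorem inv_apply_nonneg_of_offDiag_nonpos [DecidableEq ι] (hoff : ∀ i j, i ≠ j → Q i j ≤ 0)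
    (hrow : ∀ i, 0 < ∑ j, Q i j) (i j : ι) : 0 ≤ Q⁻¹ i j := by
  by_cases hQ : IsUnit Q.det
  · have hcol : Q *ᵥ (Q⁻¹ *ᵥ Pi.single j 1) = Pi.single j 1 := by
      rw [mulVec_mulVec, mul_nonsing_inv _ hQ, one_mulVec]
    have := nonneg_of_mulVec_nonneg hoff hrow (hcol ▸ Pi.single_nonneg.2 zero_le_one) i
    simpa [mulVec_single_one] using this
  · simp [nonsing_inv_apply_not_isUnit _ hQ]

end MinimumPrinciple

section ShermanMorrison

variable {ι R : Type*} [Fintype ι] [DecidableEq ι] [Field R] {M : Matrix ι ι R} {j : ι} {s : R}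

theorem inv_add_single_apply (hM : IsUnit M) (hs : 1 + s * M⁻¹ j j ≠ 0) (i k : ι) :
    (M + single j j s)⁻¹ i k = M⁻¹ i k - s * M⁻¹ i j * M⁻¹ j k / (1 + s * M⁻¹ j j) := by
  set c := s / (1 + s * M⁻¹ j j)
  have hMM : M * M⁻¹ = 1 := mul_nonsing_inv _ ((isUnit_iff_isUnit_det M).1 hM)
  have hc : s - c - c * (s * M⁻¹ j j) = 0 := by
    simp only [c]
    field_simp
    ring
  have hinv : (M + single j j s) * (M⁻¹ - c • (M⁻¹ * single j j 1 * M⁻¹)) = 1 := by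
    simp only [add_mul, mul_sub, mul_smul_comm, ← Matrix.mul_assoc, hMM, Matrix.one_mul,
      single_mul_mul_single]
    ext a b
    by_cases ha : a = j
    · subst ha
      simp only [Matrix.sub_apply, Matrix.smul_apply, Matrix.add_apply, single_mul_apply_same,
        smul_eq_mul, one_mul, mul_one]
      linear_combination M⁻¹ a b * hc
    · simp [ha]
  have hcorr : (M⁻¹ * single j j 1 * M⁻¹ : Matrix ι ι R) i k = M⁻¹ i j * M⁻¹ j k := by
    simp [mul_apply, single_apply, ite_and]
  rw [inv_eq_right_inv hinv, Matrix.sub_apply, Matrix.smul_apply, hcorr, smul_eq_mul]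
  ring

theorem inv_add_single_apply_right (hM : IsUnit M) (hs : 1 + s * M⁻¹ j j ≠ 0) (i : ι) :
    (M + single j j s)⁻¹ i j = M⁻¹ i j / (1 + s * M⁻¹ j j) := by
  rw [inv_add_single_apply hM hs]
  field_simp
  ring

theorem inv_add_single_apply_left (hM : IsUnit M) (hs : 1 + s * M⁻¹ j j ≠ 0) (k : ι) :
    (M + single j j s)⁻¹ j k = M⁻¹ j k / (1 + s * M⁻¹ j j) := by
  rw [inv_add_single_apply hM hs]
  field_simp
  ring

end ShermanMorrison

end Matrix

def shiftMatrix (n : ℕ) : Matrix (Fin n) (Fin n) ℝ :=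
  of fun i j => if (i : ℕ) + 1 = j then 1 else 0

namespace shiftMatrix

variable {n : ℕ}

theorem mulVec_apply (x : Fin n → ℝ) (i : Fin n) :
    (shiftMatrix n *ᵥ x) i = if h : (i : ℕ) + 1 < n then x ⟨i + 1, h⟩ else 0 := by
  simp only [mulVec, dotProduct, shiftMatrix, of_apply, ite_mul, one_mul, zero_mul]
  split_ifs with h
  · rw [Fintype.sum_eq_single ⟨i + 1, h⟩ fun k hk => if_neg fun e => hk (Fin.ext e.symm)]
    simp
  · exact Finset.sum_eq_zero fun k _ => if_neg (by omega)

theorem transpose_mulVec_apply (x : Fin n → ℝ) (i : Fin n) :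
    ((shiftMatrix n)ᵀ *ᵥ x) i = if h : 0 < (i : ℕ) then x ⟨i - 1, by omega⟩ else 0 := by
  simp only [mulVec, dotProduct, transpose_apply, shiftMatrix, of_apply, ite_mul, one_mul,
    zero_mul]
  split_ifs with h
  · rw [Fintype.sum_eq_single ⟨i - 1, by omega⟩
      fun k hk => if_neg fun e => hk (Fin.ext (show (k : ℕ) = i - 1 by omega))]
    simp only [ite_eq_left_iff]
    omega
  · exact Finset.sum_eq_zero fun k _ => if_neg (by omega)

theorem mul_self_apply (i j : Fin n) :
    (shiftMatrix n * shiftMatrix n) i j = if (i : ℕ) + 2 = j then 1 else 0 := by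
  rw [mul_apply_eq_mulVec_apply, mulVec_apply]
  simp only [shiftMatrix, of_apply]
  split_ifs <;> first | rfl | omega

theorem mul_transpose :
    shiftMatrix (n + 1) * (shiftMatrix (n + 1))ᵀ = 1 - single (Fin.last n) (Fin.last n) 1 := by
  ext i j
  rw [mul_apply_eq_mulVec_apply, mulVec_apply]
  simp only [transpose_apply, shiftMatrix, of_apply, Matrix.sub_apply, one_apply, single_apply,
    Fin.ext_iff, Fin.val_last]
  split_ifs <;> first | omega | norm_num

theorem transpose_mul : (shiftMatrix (n + 1))ᵀ * shiftMatrix (n + 1) = 1 - single 0 0 1 := by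
  ext i j
  rw [mul_apply_eq_mulVec_apply, transpose_mulVec_apply]
  simp only [shiftMatrix, of_apply, Matrix.sub_apply, one_apply, single_apply, Fin.ext_iff,
    Fin.val_zero]
  split_ifs <;> first | omega | norm_num

theorem det_one_sub : (1 - shiftMatrix n).det = 1 := by
  rw [det_of_isUpperTriangular]
  · simp [shiftMatrix]
  · intro i j (hij : j < i)
    have : (i : ℕ) + 1 ≠ j := by omega
    simp [shiftMatrix, one_apply, hij.ne', this]

end shiftMatrix

def laplacian (n : ℕ) : Matrix (Fin n) (Fin n) ℝ :=
  (2 : ℝ) • 1 - shiftMatrix n - (shiftMatrix n)ᵀ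

namespace laplacian

variable {n : ℕ}

theorem transpose : (laplacian n)ᵀ = laplacian n := by
  simp only [laplacian, transpose_sub, transpose_smul, transpose_one, transpose_transpose]
  abel

theorem apply_nonpos {i j : Fin n} (hij : i ≠ j) : laplacian n i j ≤ 0 := by
  simp only [laplacian, Matrix.sub_apply, Matrix.smul_apply, one_apply_ne hij, transpose_apply,
    shiftMatrix, of_apply]
  split_ifs <;> norm_num

theorem mulVec_apply (x : Fin n → ℝ) (i : Fin n) :
    (laplacian n *ᵥ x) i = 2 * x i - (if h : (i : ℕ) + 1 < n then x ⟨i + 1, h⟩ else 0)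
      - (if h : 0 < (i : ℕ) then x ⟨i - 1, by omega⟩ else 0) := by
  rw [laplacian, sub_mulVec, sub_mulVec, smul_mulVec, one_mulVec, Pi.sub_apply, Pi.sub_apply,
    shiftMatrix.mulVec_apply, shiftMatrix.transpose_mulVec_apply, Pi.smul_apply, smul_eq_mul]

theorem sum_apply_nonneg (i : Fin n) : 0 ≤ ∑ j, laplacian n i j := by
  have := mulVec_apply (fun _ => 1) i
  simp only [mulVec, dotProduct, mul_one] at this
  rw [this]
  split_ifs <;> norm_num

theorem eq_mul_transpose_add_single : laplacian (n + 1) =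
    (1 - shiftMatrix (n + 1)) * (1 - shiftMatrix (n + 1))ᵀ
      + single (Fin.last n) (Fin.last n) 1 := by
  rw [transpose_sub, transpose_one, sub_mul, mul_sub, mul_sub, shiftMatrix.mul_transpose,
    laplacian]
  simp only [Matrix.one_mul, Matrix.mul_one]
  module

theorem posDef : (laplacian (n + 1)).PosDef := by
  have hunit : IsUnit (1 - shiftMatrix (n + 1)) := by
    rw [isUnit_iff_isUnit_det, shiftMatrix.det_one_sub]
    exact isUnit_one
  rw [eq_mul_transpose_add_single]
  refine PosDef.add_posSemidef ?_ (posSemidef_single _ zero_le_one)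
  simpa [conjTranspose_eq_transpose_of_trivial] using
    PosDef.mul_conjTranspose_self _ (vecMul_injective_iff_isUnit.2 hunit)

theorem inv_apply_last (k : Fin (n + 1)) :
    (laplacian (n + 1))⁻¹ k (Fin.last n) = ((k : ℕ) + 1) / (n + 2) := by
  set v : Fin (n + 1) → ℝ := fun k => ((k : ℕ) + 1) / (n + 2)
  have hv : laplacian (n + 1) *ᵥ v = Pi.single (Fin.last n) 1 := by
    ext ⟨i, hi⟩
    simp only [mulVec_apply, Pi.single_apply, Fin.ext_iff, Fin.val_last, v]
    rcases Nat.lt_succ_iff_lt_or_eq.1 hi with h | rfl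
    · rw [dif_pos (by omega), if_neg h.ne]
      rcases i with _ | i
      · rw [dif_neg (lt_irrefl 0)]
        push_cast
        field_simp
        ring
      · rw [dif_pos i.succ_pos]
        push_cast
        field_simp
        ring
    · rw [dif_neg (lt_irrefl _), if_pos rfl]
      rcases i with _ | i
      · rw [dif_neg (lt_irrefl 0)]
        norm_num
      · rw [dif_pos i.succ_pos]
        push_cast
        field_simp
        ring
  have hdet : IsUnit (laplacian (n + 1)).det := (isUnit_iff_isUnit_det _).1 posDef.isUnit
  calc (laplacian (n + 1))⁻¹ k (Fin.last n)
      = ((laplacian (n + 1))⁻¹ *ᵥ (laplacian (n + 1) *ᵥ v)) k := by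
        rw [hv, mulVec_single_one]
        rfl
    _ = v k := by rw [mulVec_mulVec, nonsing_inv_mul _ hdet, one_mulVec]

end laplacian

def pentadiagonal (n : ℕ) (k : ℝ) : Matrix (Fin n) (Fin n) ℝ :=
  of fun i j =>
    if (i : ℤ) = j then 2 * (1 + k)
    else if |(i : ℤ) - j| = 1 then -1
    else if |(i : ℤ) - j| = 2 then -k
    else 0

namespace pentadiagonal

variable {n : ℕ}

theorem eq_shiftMatrix (k : ℝ) : pentadiagonal n k = (2 + 2 * k) • 1 - shiftMatrix n
    - (shiftMatrix n)ᵀ - k • (shiftMatrix n * shiftMatrix n + (shiftMatrix n * shiftMatrix n)ᵀ) := by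
  ext i j
  have h₁ : |(i : ℤ) - j| = 1 ↔ (i : ℕ) + 1 = j ∨ (j : ℕ) + 1 = i := by
    rw [abs_eq zero_le_one]
    omega
  have h₂ : |(i : ℤ) - j| = 2 ↔ (i : ℕ) + 2 = j ∨ (j : ℕ) + 2 = i := by
    rw [abs_eq zero_le_two]
    omega
  simp only [Matrix.sub_apply, Matrix.smul_apply, Matrix.add_apply, transpose_apply,
    shiftMatrix.mul_self_apply]
  simp only [pentadiagonal, shiftMatrix, of_apply, one_apply, Nat.cast_inj, h₁, h₂, smul_eq_mul,
    Fin.ext_iff]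
  split_ifs <;> first | omega | ring

theorem eq_laplacian_add_single (k : ℝ) : pentadiagonal (n + 1) k =
    (1 + 4 * k) • laplacian (n + 1) - k • (laplacian (n + 1) * laplacian (n + 1))
      + single 0 0 (-k) + single (Fin.last n) (Fin.last n) (-k) := by
  have hsingle (i : Fin (n + 1)) : single i i (-k) = (-k) • single i i 1 := by
    rw [smul_single, smul_eq_mul, mul_one]
  rw [eq_shiftMatrix, hsingle, hsingle]
  simp only [laplacian, sub_mul, mul_sub, smul_mul_assoc, mul_smul_comm, Matrix.one_mul,
    Matrix.mul_one, shiftMatrix.mul_transpose, shiftMatrix.transpose_mul, ← Matrix.transpose_mul]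
  module

end pentadiagonal

section LaplacianPolynomial

variable {n : ℕ} {k : ℝ}

theorem posDef_smul_laplacian_sub (hk : -1 / 4 < k) (hk0 : k ≤ 0) :
    ((1 + 4 * k) • laplacian (n + 1) - k • (laplacian (n + 1) * laplacian (n + 1))).PosDef := by
  have hsq : (laplacian (n + 1) * laplacian (n + 1)).PosSemidef := by
    simpa [conjTranspose_eq_transpose_of_trivial, laplacian.transpose] using
      posSemidef_conjTranspose_mul_self (laplacian (n + 1))
  rw [sub_eq_add_neg, ← neg_smul]
  exact (laplacian.posDef.smul (by linarith)).add_posSemidef (hsq.smul (by linarith))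

theorem inv_smul_laplacian_sub_apply_zero_last_pos (hk : -1 / 4 < k) (hk0 : k ≤ 0) :
    0 < ((1 + 4 * k) • laplacian (n + 1)
      - k • (laplacian (n + 1) * laplacian (n + 1)))⁻¹ 0 (Fin.last n) := by
  set Q : Matrix (Fin (n + 1)) (Fin (n + 1)) ℝ := (1 + 4 * k) • 1 + (-k) • laplacian (n + 1)
  have hPQ : (1 + 4 * k) • laplacian (n + 1) - k • (laplacian (n + 1) * laplacian (n + 1)) =
      laplacian (n + 1) * Q := by
    simp only [Q, mul_add, mul_smul_comm, Matrix.mul_one, neg_smul, sub_eq_add_neg,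
      Matrix.mul_neg]
  have hQ : Q.PosDef :=
    (PosDef.one.smul (by linarith)).add_posSemidef (laplacian.posDef.posSemidef.smul (by linarith))
  have hQinv : ∀ i j, 0 ≤ Q⁻¹ i j := by
    refine inv_apply_nonneg_of_offDiag_nonpos (fun i j hij => ?_) (fun i => ?_)
    · simp only [Q, Matrix.add_apply, Matrix.smul_apply, one_apply_ne hij, smul_eq_mul, mul_zero,
        zero_add]
      nlinarith [laplacian.apply_nonpos hij]
    · simp only [Q, Matrix.add_apply, Matrix.smul_apply, smul_eq_mul, Finset.sum_add_distrib,
        ← Finset.mul_sum, one_apply, Finset.sum_ite_eq, Finset.mem_univ, if_true, mul_one]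
      nlinarith [laplacian.sum_apply_nonneg i]
  have hPinv (i : Fin (n + 1)) : 0 < (laplacian (n + 1))⁻¹ i (Fin.last n) := by
    rw [laplacian.inv_apply_last]
    positivity
  rw [hPQ, Matrix.mul_inv_rev, mul_apply]
  exact Finset.sum_pos' (fun i _ => mul_nonneg (hQinv _ _) (hPinv i).le)
    ⟨0, Finset.mem_univ _, mul_pos hQ.inv.diag_pos (hPinv 0)⟩

end LaplacianPolynomial

theorem stmt_8_general (M : ℕ) (k₂ : ℝ) (hk₂l : -1/4 < k₂) (hk₂u : k₂ < 0)
    (A : Matrix (Fin (2 * M + 1)) (Fin (2 * M + 1)) ℝ)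
    (hA : ∀ i j : Fin (2 * M + 1), A i j =
      if (i : ℤ) = (j : ℤ) then 2 * (1 + k₂)
      else if |(i : ℤ) - (j : ℤ)| = 1 then -1
      else if |(i : ℤ) - (j : ℤ)| = 2 then -k₂
      else 0) :
    0 < A⁻¹ 0 0 ∧ 0 < A⁻¹ 0 (Fin.last (2 * M)) := by
  obtain rfl : A = pentadiagonal (2 * M + 1) k₂ := Matrix.ext hA
  set l := Fin.last (2 * M)
  set D := (1 + 4 * k₂) • laplacian (2 * M + 1)
    - k₂ • (laplacian (2 * M + 1) * laplacian (2 * M + 1))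
  set B := D + single 0 0 (-k₂)
  have ht : 0 < -k₂ := by linarith
  have hD : D.PosDef := posDef_smul_laplacian_sub hk₂l hk₂u.le
  have hB : B.PosDef := hD.add_posSemidef (posSemidef_single 0 ht.le)
  have hA : (B + single l l (-k₂)).PosDef := hB.add_posSemidef (posSemidef_single l ht.le)
  have hD₀₀ : 0 < D⁻¹ 0 0 := hD.inv.diag_pos
  have hBₗₗ : 0 < B⁻¹ l l := hB.inv.diag_pos
  have hD₀ₗ : 0 < D⁻¹ 0 l := inv_smul_laplacian_sub_apply_zero_last_pos hk₂l hk₂u.le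
  rw [pentadiagonal.eq_laplacian_add_single]
  refine ⟨hA.inv.diag_pos, ?_⟩
  rw [inv_add_single_apply_right hB.isUnit (by positivity),
    inv_add_single_apply_left hD.isUnit (by positivity)]
  positivity

/-- For the symmetric pentadiagonal Toeplitz matrix of size `N = 2M+1` with
diagonal `2(1+k₂)`, first off-diagonals `-1`, second off-diagonals `-k₂`,
with `k₂ ∈ (-1/4, 0)`, the corner entries of the inverse satisfy
`(A⁻¹)₁,₁ > 0` and `(A⁻¹)₁,N > 0`. -/
theorem stmt_8 (M : ℕ) (hM : 1 ≤ M) (k₂ : ℝ) (hk₂l : -1/4 < k₂) (hk₂u : k₂ < 0)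
    (A : Matrix (Fin (2 * M + 1)) (Fin (2 * M + 1)) ℝ)
    (hA : ∀ i j : Fin (2 * M + 1), A i j =
      if (i : ℤ) = (j : ℤ) then 2 * (1 + k₂)
      else if |(i : ℤ) - (j : ℤ)| = 1 then -1
      else if |(i : ℤ) - (j : ℤ)| = 2 then -k₂
      else 0) :
    0 < A⁻¹ 0 0 ∧ 0 < A⁻¹ 0 (Fin.last (2 * M)) :=
  stmt_8_general M k₂ hk₂l hk₂u A hA
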